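/- arXiv:1309.5751 — 2 statements merged into one kernel-verified Lean document; each statement's English description precedes it below -/
import Mathlib

section
/- Every σ-henselian valued difference field of residue characteristic 0 satisfies Axiom 2: its residue difference field is linear difference closed. -/
noncomputable section
open scoped Classical

/-- A valued difference field: a valued field `(K, v)` with value group `Γ`
(additive, `v : K → WithTop Γ`, `v 0 = ⊤`), together with a distinguished field
automorphism `σ` fixing the valuation ring setwise; `σΓ` is the induced
order-preserving automorphism of the value group. -/
structure VDF (K : Type*) [Field K] (Γ : Type*) [AddCommGroup Γ] [LinearOrder Γ] [IsOrderedAddMonoid Γ] where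
  v : K → WithTop Γ
  σ : K ≃+* K
  σΓ : Γ ≃o Γ
  v_eq_top_iff : ∀ x : K, v x = ⊤ ↔ x = 0
  v_one : v 1 = 0
  v_mul : ∀ x y : K, v (x * y) = v x + v y
  v_neg : ∀ x : K, v (-x) = v x
  v_add : ∀ x y : K, min (v x) (v y) ≤ v (x + y)
  v_sigma : ∀ x : K, v (σ x) = WithTop.map σΓ (v x)

namespace VDF

variable {K : Type*} [Field K] {Γ : Type*} [AddCommGroup Γ] [LinearOrder Γ] [IsOrderedAddMonoid Γ]

/-- A σ-polynomial of order `≤ n - 1` over `K` is encoded as an ordinary polynomial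
`P` in the variables `X 0, …, X (n-1)`; its value at `a` is obtained by substituting
`σ^k(a)` for `X k`. -/
def sEval (V : VDF K Γ) {n : ℕ} (P : MvPolynomial (Fin n) K) (a : K) : K :=
  MvPolynomial.eval (fun k : Fin n => (⇑V.σ)^[(k : ℕ)] a) P

/-- `σ^i(γ) = Σ_k i_k σ^k(γ)` for a multi-index `i`. -/
def sigmaIdx (V : VDF K Γ) {n : ℕ} (i : Fin n →₀ ℕ) (γ : Γ) : Γ :=
  ∑ k : Fin n, (i k) • (⇑V.σΓ)^[(k : ℕ)] γ

/-- `F_v(γ) = min_i (v(a_i) + σ^i(γ))`, the minimum over the monomials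
(support) of the σ-polynomial `P` with coefficients `a_i`. -/
def Fv (V : VDF K Γ) {n : ℕ} (P : MvPolynomial (Fin n) K) (γ : Γ) : WithTop Γ :=
  P.support.inf fun i => V.v (MvPolynomial.coeff i P) + (V.sigmaIdx i γ : WithTop Γ)

/-- The norm `|j| = Σ_k j_k` of a multi-index. -/
def degSum {n : ℕ} (j : Fin n →₀ ℕ) : ℕ := j.sum fun _ m => m

/-- The formal Taylor coefficient (Hasse derivative) `P_(j)` of a σ-polynomial `P`,
so that `P(y + x) = Σ_j P_(j)(y) σ(x)^j`. -/
def hasse {n : ℕ} (P : MvPolynomial (Fin n) K) (j : Fin n →₀ ℕ) :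
    MvPolynomial (Fin n) K :=
  MvPolynomial.coeff j
    (MvPolynomial.bind₁
      (fun k => (MvPolynomial.C (MvPolynomial.X k) + MvPolynomial.X k :
        MvPolynomial (Fin n) (MvPolynomial (Fin n) K)))
      (MvPolynomial.map MvPolynomial.C P))

/-- `(G, a)` is in σ-hensel configuration with associated `γ`. -/
def InSHC (V : VDF K Γ) {n : ℕ} (P : MvPolynomial (Fin (n + 1)) K) (a : K) (γ : Γ) :
    Prop :=
  (∃ i ∈ P.support, i ≠ 0) ∧
  (∃ i : Fin (n + 1) →₀ ℕ, degSum i = 1 ∧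
      V.v (V.sEval P a) =
        V.v (V.sEval (hasse P i) a) + (V.sigmaIdx i γ : WithTop Γ)) ∧
  (∀ j : Fin (n + 1) →₀ ℕ, degSum j = 1 →
      V.v (V.sEval P a) ≤ V.v (V.sEval (hasse P j) a) + (V.sigmaIdx j γ : WithTop Γ)) ∧
  (∀ j l : Fin (n + 1) →₀ ℕ, j ≠ 0 → l ≠ 0 → hasse P j ≠ 0 →
      V.v (V.sEval (hasse P j) a) + (V.sigmaIdx j γ : WithTop Γ) <
        V.v (V.sEval (hasse P (j + l)) a) + (V.sigmaIdx (j + l) γ : WithTop Γ))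

/-- The residue field has characteristic zero. -/
def resChar0 (V : VDF K Γ) : Prop := ∀ m : ℕ, 0 < m → V.v (m : K) = 0

/-- Axiom 2: the residue difference field is linear difference closed, phrased at the
level of `K`: for `a_0, …, a_m` in the valuation ring, with some `a_i` a unit, the
equation `1 + Σ_i ā_i σ̄^i(x) = 0` has a solution in the residue field. -/
def axiom2 (V : VDF K Γ) : Prop :=
  ∀ (m : ℕ) (a : Fin (m + 1) → K), (∀ i, 0 ≤ V.v (a i)) → (∃ i, V.v (a i) = 0) →
    ∃ u : K, 0 ≤ V.v u ∧ 0 < V.v (1 + ∑ i : Fin (m + 1), a i * (⇑V.σ)^[(i : ℕ)] u)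

/-- σ-henselianity. -/
def sigmaHenselian (V : VDF K Γ) : Prop :=
  ∀ (n : ℕ) (P : MvPolynomial (Fin (n + 1)) K) (a : K) (γ : Γ),
    V.InSHC P a γ → ∃ b : K, V.v (b - a) = (γ : WithTop Γ) ∧ V.sEval P b = 0

/-- `s` is a pseudo-Cauchy sequence. -/
def IsPC (V : VDF K Γ) {I : Type*} [LinearOrder I] (s : I → K) : Prop :=
  ∃ i0 : I, ∀ i j k : I, i0 ≤ i → i < j → j < k → V.v (s j - s i) < V.v (s k - s j)

/-- `x` is a pseudolimit of `s`, i.e. `v (x - s ρ)` is eventually strictly increasing. -/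
def Plim (V : VDF K Γ) {I : Type*} [LinearOrder I] (s : I → K) (x : K) : Prop :=
  ∃ i0 : I, ∀ i j : I, i0 ≤ i → i < j → V.v (x - s i) < V.v (x - s j)

/-- Equivalence of pc-sequences: they have the same pseudolimits. -/
def EquivPC (V : VDF K Γ) {I : Type*} [LinearOrder I] (s t : I → K) : Prop :=
  ∀ x : K, V.Plim s x ↔ V.Plim t x

/-- Axiom 1 for a difference subfield `E` of `K`: the induced automorphism of the
residue field of `E` is of infinite order, phrased at the level of `E`:
for each `d > 0` there is `y` in the valuation ring of `E` with
`σ̄^d(ȳ) ≠ ȳ`, i.e. `v (σ^d y - y) = 0`. -/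
def axiom1On (V : VDF K Γ) (E : Subfield K) : Prop :=
  ∀ d : ℕ, 0 < d → ∃ y ∈ E, 0 ≤ V.v y ∧ V.v ((⇑V.σ)^[d] y - y) = 0

end VDF

/-!
The linear σ-polynomial `P = 1 + Σ aᵢ Xᵢ` is in σ-hensel configuration at `0` with `γ = 0`:
`v (P 0) = v 1 = 0`, its first Taylor coefficients are the `aᵢ`, of valuation `≥ 0` with one of
them a unit, and all its higher Taylor coefficients vanish. σ-henselianity then yields a root `b`
of `P` with `v b = 0`, and the residue of `b` solves `1 + Σ āᵢ σ̄ⁱ(x) = 0`.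
-/

open MvPolynomial

section LinearSigmaPolynomial

variable {K : Type*} [Field K] {n : ℕ}

def linearSigmaPoly (a : Fin n → K) : MvPolynomial (Fin n) K :=
  1 + ∑ i, C (a i) * X i

lemma coeff_linearSigmaPoly_of_ne_zero (a : Fin n → K) {j : Fin n →₀ ℕ} (hj : j ≠ 0) :
    coeff j (linearSigmaPoly a) = ∑ i, a i * coeff j (X i) := by
  simp [linearSigmaPoly, coeff_one, coeff_sum, Ne.symm hj]

lemma hasse_linearSigmaPoly_of_ne_zero (a : Fin n → K) {j : Fin n →₀ ℕ} (hj : j ≠ 0) :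
    VDF.hasse (linearSigmaPoly a) j = C (coeff j (linearSigmaPoly a)) := by
  rw [coeff_linearSigmaPoly_of_ne_zero a hj, VDF.hasse, linearSigmaPoly]
  simp only [map_add, map_one, map_sum, map_mul, map_C, map_X, bind₁_C_right, bind₁_X_right]
  simp [coeff_sum, coeff_one, Ne.symm hj, coeff_C, coeff_X, apply_ite C]

lemma coeff_single_linearSigmaPoly (a : Fin n → K) (k : Fin n) :
    coeff (Finsupp.single k 1) (linearSigmaPoly a) = a k := by
  rw [coeff_linearSigmaPoly_of_ne_zero a (by simp)]
  simp [coeff_X, Finsupp.single_left_inj]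

lemma coeff_linearSigmaPoly_of_two_le (a : Fin n → K) {j : Fin n →₀ ℕ}
    (hj : 2 ≤ j.degree) : coeff j (linearSigmaPoly a) = 0 := by
  rw [coeff_linearSigmaPoly_of_ne_zero a (by rintro rfl; simp at hj)]
  refine Finset.sum_eq_zero fun i _ => ?_
  rw [coeff_X, if_neg, mul_zero]
  rintro rfl
  simp at hj

end LinearSigmaPolynomial

namespace VDF

variable {K : Type*} [Field K] {Γ : Type*} [AddCommGroup Γ] [LinearOrder Γ] [IsOrderedAddMonoid Γ]
  (V : VDF K Γ)

lemma v_zero : V.v 0 = ⊤ := (V.v_eq_top_iff 0).mpr rfl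

lemma v_lt_top {x : K} (hx : x ≠ 0) : V.v x < ⊤ :=
  lt_top_iff_ne_top.mpr fun h => hx ((V.v_eq_top_iff x).mp h)

lemma σΓ_zero : V.σΓ 0 = 0 := by
  have h := V.v_sigma 1
  rw [map_one, V.v_one, ← WithTop.coe_zero, WithTop.map_coe] at h
  exact_mod_cast h.symm

lemma sigmaIdx_zero {n : ℕ} (j : Fin n →₀ ℕ) : V.sigmaIdx j 0 = 0 :=
  Finset.sum_eq_zero fun k _ => by rw [Function.iterate_fixed V.σΓ_zero, smul_zero]

lemma sEval_C {n : ℕ} (c x : K) : V.sEval (C c : MvPolynomial (Fin n) K) x = c :=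
  eval_C c

lemma sEval_linearSigmaPoly {n : ℕ} (a : Fin n → K) (x : K) :
    V.sEval (linearSigmaPoly a) x = 1 + ∑ i, a i * (⇑V.σ)^[(i : ℕ)] x := by
  simp [sEval, linearSigmaPoly]

lemma sEval_linearSigmaPoly_zero {n : ℕ} (a : Fin n → K) :
    V.sEval (linearSigmaPoly a) 0 = 1 := by
  simp [sEval_linearSigmaPoly, Function.iterate_fixed (map_zero V.σ)]

lemma sEval_hasse_linearSigmaPoly {n : ℕ} (a : Fin n → K) {j : Fin n →₀ ℕ} (hj : j ≠ 0)
    (x : K) : V.sEval (hasse (linearSigmaPoly a) j) x = coeff j (linearSigmaPoly a) := by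
  rw [hasse_linearSigmaPoly_of_ne_zero a hj, sEval_C]

lemma inSHC_linearSigmaPoly {m : ℕ} (a : Fin (m + 1) → K) (ha : ∀ i, 0 ≤ V.v (a i))
    (hunit : ∃ i, V.v (a i) = 0) : V.InSHC (linearSigmaPoly a) 0 0 := by
  obtain ⟨i₀, hi₀⟩ := hunit
  have single_ne_zero (k : Fin (m + 1)) : Finsupp.single k 1 ≠ 0 := by simp
  have hP : V.v (V.sEval (linearSigmaPoly a) 0) = 0 := by
    rw [sEval_linearSigmaPoly_zero, v_one]
  have hσ (j : Fin (m + 1) →₀ ℕ) : ((V.sigmaIdx j 0 : Γ) : WithTop Γ) = 0 := by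
    rw [sigmaIdx_zero, WithTop.coe_zero]
  have hcoeff (k : Fin (m + 1)) :
      V.sEval (hasse (linearSigmaPoly a) (Finsupp.single k 1)) 0 = a k := by
    rw [sEval_hasse_linearSigmaPoly V a (single_ne_zero k), coeff_single_linearSigmaPoly]
  refine ⟨⟨_, ?_, single_ne_zero i₀⟩, ⟨_, (Finsupp.sum_eq_one_iff _).mpr ⟨i₀, rfl⟩, ?_⟩,
    fun j hj => ?_, fun j l hj hl hne => ?_⟩
  · rw [mem_support_iff, coeff_single_linearSigmaPoly]
    rintro h
    simp [h, v_zero] at hi₀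
  · rw [hP, hcoeff, hi₀, hσ, add_zero]
  · obtain ⟨k, rfl⟩ := (Finsupp.sum_eq_one_iff _).mp hj
    rw [hP, hcoeff, hσ, add_zero]
    exact ha k
  · have hjl : 2 ≤ (j + l).degree := by
      have := (Finsupp.degree_eq_zero_iff j).not.mpr hj
      have := (Finsupp.degree_eq_zero_iff l).not.mpr hl
      rw [map_add]
      omega
    rw [hasse_linearSigmaPoly_of_ne_zero a hj, Ne, C_eq_zero] at hne
    rw [sEval_hasse_linearSigmaPoly V a hj, sEval_hasse_linearSigmaPoly V a (by simp [hj]),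
      coeff_linearSigmaPoly_of_two_le a hjl, v_zero, hσ, hσ, add_zero, top_add]
    exact V.v_lt_top hne

end VDF

theorem stmt11_general {K : Type*} [Field K] {Γ : Type*} [AddCommGroup Γ] [LinearOrder Γ] [IsOrderedAddMonoid Γ]
    (V : VDF K Γ) (hh : V.sigmaHenselian) : V.axiom2 := by
  intro m a ha hunit
  obtain ⟨b, hb, hroot⟩ := hh m _ 0 0 (V.inSHC_linearSigmaPoly a ha hunit)
  rw [sub_zero] at hb
  refine ⟨b, by rw [hb, WithTop.coe_zero], ?_⟩
  rw [← V.sEval_linearSigmaPoly, hroot, V.v_zero]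
  exact WithTop.coe_lt_top 0

/-- every σ-henselian valued difference field of residue characteristic
`0` satisfies Axiom 2: its residue difference field is linear difference closed. -/
theorem stmt11 {K : Type*} [Field K] {Γ : Type*} [AddCommGroup Γ] [LinearOrder Γ] [IsOrderedAddMonoid Γ]
    (V : VDF K Γ) (hchar : V.resChar0) (hh : V.sigmaHenselian) : V.axiom2 :=
  stmt11_general V hh
end
end

section
/- Let K be an algebraically closed valued field and F a nonzero polynomial over K in one variable. If a ∈ K^× is a root of F then v(a) is a tropical zero of F. -/
/-! If `F(a) = 0`, the terms `a_i a^i` of `F(a)` sum to zero. By the ultrametric inequality a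
finite sum whose term of least valuation is unique has exactly that valuation, so it cannot
vanish; hence the least value `v(a_i) + i·v(a)`, which is `F_v(v a)`, is attained twice. -/

noncomputable section
open scoped Classical

/-- A valued field `(K, v)` with value group `Γ` (additive, `v 0 = ⊤`). -/
structure VF (K : Type*) [Field K] (Γ : Type*) [AddCommGroup Γ] [LinearOrder Γ] [IsOrderedAddMonoid Γ] where
  v : K → WithTop Γ
  v_eq_top_iff : ∀ x : K, v x = ⊤ ↔ x = 0
  v_one : v 1 = 0
  v_mul : ∀ x y : K, v (x * y) = v x + v y
  v_neg : ∀ x : K, v (-x) = v x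
  v_add : ∀ x y : K, min (v x) (v y) ≤ v (x + y)

namespace VF

variable {K : Type*} [Field K] {Γ : Type*} [AddCommGroup Γ] [LinearOrder Γ] [IsOrderedAddMonoid Γ]

/-- The tropicalization `F_v(γ) = min_i (v (a_i) + i γ)` of a one-variable polynomial
`F = Σ_i a_i x^i` (minimum over indices with `a_i ≠ 0`). -/
def Fv1 (V : VF K Γ) (F : Polynomial K) (γ : Γ) : WithTop Γ :=
  F.support.inf fun i => V.v (F.coeff i) + ((i • γ : Γ) : WithTop Γ)

/-- `γ` is a tropical zero of `F`: the minimum `F_v(γ)` is attained at two distinct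
indices. -/
def TropZero (V : VF K Γ) (F : Polynomial K) (γ : Γ) : Prop :=
  ∃ i ∈ F.support, ∃ j ∈ F.support, i ≠ j ∧
    V.v (F.coeff i) + ((i • γ : Γ) : WithTop Γ) = V.Fv1 F γ ∧
    V.v (F.coeff j) + ((j • γ : Γ) : WithTop Γ) = V.Fv1 F γ

/-- The valuation is nontrivial. -/
def Nontriv (V : VF K Γ) : Prop := ∃ x : K, x ≠ 0 ∧ V.v x ≠ 0

end VF

namespace VF

variable {K : Type*} [Field K] {Γ : Type*} [AddCommGroup Γ] [LinearOrder Γ]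
  [IsOrderedAddMonoid Γ] (V : VF K Γ)

lemma v_zero : V.v 0 = ⊤ := (V.v_eq_top_iff 0).mpr rfl

lemma v_ne_top {x : K} (hx : x ≠ 0) : V.v x ≠ ⊤ := fun h => hx ((V.v_eq_top_iff x).mp h)

lemma v_pow (x : K) (n : ℕ) : V.v (x ^ n) = n • V.v x := by
  induction n with
  | zero => simpa using V.v_one
  | succ n ih => rw [pow_succ, V.v_mul, ih, succ_nsmul]

lemma v_add_eq_left_of_lt {x y : K} (h : V.v x < V.v y) : V.v (x + y) = V.v x := by
  refine le_antisymm ?_ (by simpa [min_eq_left h.le] using V.v_add x y)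
  have hx : min (V.v (x + y)) (V.v y) ≤ V.v x := by
    simpa [V.v_neg] using V.v_add (x + y) (-y)
  exact (min_le_iff.mp hx).resolve_right (not_le.mpr h)

lemma inf_le_v_sum {ι : Type*} (s : Finset ι) (f : ι → K) :
    s.inf (fun i => V.v (f i)) ≤ V.v (∑ i ∈ s, f i) := by
  induction s using Finset.induction_on with
  | empty => simp [V.v_zero]
  | insert i s hi ih =>
    rw [Finset.sum_insert hi, Finset.inf_insert]
    exact (min_le_min le_rfl ih).trans (V.v_add _ _)

lemma v_sum_eq_of_lt {ι : Type*} [DecidableEq ι] {s : Finset ι} {f : ι → K} {i : ι}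
    (hi : i ∈ s) (hlt : ∀ j ∈ s, j ≠ i → V.v (f i) < V.v (f j)) :
    V.v (∑ j ∈ s, f j) = V.v (f i) := by
  rw [← Finset.add_sum_erase s f hi]
  rcases (s.erase i).eq_empty_or_nonempty with hempty | hne
  · rw [hempty, Finset.sum_empty, add_zero]
  · refine V.v_add_eq_left_of_lt (lt_of_lt_of_le ?_ (V.inf_le_v_sum _ f))
    obtain ⟨j, hj, hinf⟩ := Finset.exists_mem_eq_inf _ hne fun j => V.v (f j)
    rw [hinf]
    exact hlt j (Finset.mem_of_mem_erase hj) (Finset.ne_of_mem_erase hj)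

lemma exists_ne_v_eq_of_sum_eq_zero {ι : Type*} [DecidableEq ι] {s : Finset ι} {f : ι → K}
    {i : ι} (hsum : ∑ j ∈ s, f j = 0) (hi : i ∈ s) (hfi : f i ≠ 0)
    (hmin : ∀ j ∈ s, V.v (f i) ≤ V.v (f j)) :
    ∃ j ∈ s, j ≠ i ∧ V.v (f j) = V.v (f i) := by
  by_contra! hne
  have hv := V.v_sum_eq_of_lt hi fun j hj hji => lt_of_le_of_ne (hmin j hj) (hne j hj hji).symm
  rw [hsum, V.v_zero] at hv
  exact V.v_ne_top hfi hv.symm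

lemma v_coeff_mul_pow {F : Polynomial K} {a : K} {γ : Γ} (hγ : V.v a = γ) (i : ℕ) :
    V.v (F.coeff i * a ^ i) = V.v (F.coeff i) + ((i • γ : Γ) : WithTop Γ) := by
  rw [V.v_mul, V.v_pow, hγ, WithTop.coe_nsmul]

theorem tropZero_of_isRoot {F : Polynomial K} (hF : F ≠ 0) {a : K} {γ : Γ} (hγ : V.v a = γ)
    (hroot : F.eval a = 0) : V.TropZero F γ := by
  have ha : a ≠ 0 := fun h => WithTop.coe_ne_top (hγ ▸ h ▸ V.v_zero)
  obtain ⟨i, hi, hinf⟩ := Finset.exists_mem_eq_inf F.support (F.nonempty_support_iff.mpr hF)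
    fun i => V.v (F.coeff i) + ((i • γ : Γ) : WithTop Γ)
  have hsum : ∑ j ∈ F.support, F.coeff j * a ^ j = 0 := by
    rwa [Polynomial.eval_eq_sum, Polynomial.sum] at hroot
  have hmin : ∀ j ∈ F.support, V.v (F.coeff i * a ^ i) ≤ V.v (F.coeff j * a ^ j) := by
    intro j hj
    rw [V.v_coeff_mul_pow hγ, V.v_coeff_mul_pow hγ, ← hinf]
    exact Finset.inf_le hj
  obtain ⟨j, hj, hji, hv⟩ := V.exists_ne_v_eq_of_sum_eq_zero hsum hi
    (mul_ne_zero (Polynomial.mem_support_iff.mp hi) (pow_ne_zero i ha)) hmin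
  rw [V.v_coeff_mul_pow hγ, V.v_coeff_mul_pow hγ] at hv
  exact ⟨i, hi, j, hj, hji.symm, hinf.symm, hv.trans hinf.symm⟩

end VF

theorem stmt15_general {K : Type*} [Field K]
    {Γ : Type*} [AddCommGroup Γ] [LinearOrder Γ] [IsOrderedAddMonoid Γ]
    (V : VF K Γ) (F : Polynomial K) (hF : F ≠ 0) (a : K) (ha : a ≠ 0)
    (hroot : Polynomial.eval a F = 0) :
    ∃ γ : Γ, V.v a = (γ : WithTop Γ) ∧ V.TropZero F γ := by
  obtain ⟨γ, hγ⟩ := WithTop.ne_top_iff_exists.mp (V.v_ne_top ha)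
  exact ⟨γ, hγ.symm, V.tropZero_of_isRoot hF hγ.symm hroot⟩

/-- over an algebraically closed valued field, if `a ∈ K^×` is a root of
the nonzero polynomial `F`, then `v a` is a tropical zero of `F`. -/
theorem stmt15 {K : Type*} [Field K] [IsAlgClosed K]
    {Γ : Type*} [AddCommGroup Γ] [LinearOrder Γ] [IsOrderedAddMonoid Γ]
    (V : VF K Γ) (F : Polynomial K) (hF : F ≠ 0) (a : K) (ha : a ≠ 0)
    (hroot : Polynomial.eval a F = 0) :
    ∃ γ : Γ, V.v a = (γ : WithTop Γ) ∧ V.TropZero F γ :=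
  stmt15_general V F hF a ha hroot
end
end
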